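/- Let x ≥ γ² and y ≥ 1/γ with γ = 3000, and set H_A = log₂(1+x+1/y), H_B = log₂(1+xy). Then f(1+xy) − f(1+y) ≥ c₁·H_A/(log₂(2+H_B))² − c₂ for absolute constants c₁ > 0, c₂ ≥ 0, where f(x) = log₂(x)/(log₂(2+log₂ x))². -/

import Mathlib

/-!
Write `f = g ∘ log₂` with `g t = t / L(t)²`, `L(t) = log₂ (2 + t)`. For `t ≥ 0`,
`g' t = 1 / L² - 2t / ((2 + t) log 2 · L³) ≥ 1 / (8 L²)`, because `2t ≤ (7/8) (2 + t) log (2 + t)`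
(the tangent line of `u log u` at `u = 4`). Since `L` increases, the mean value theorem gives
`g s₂ - g s₁ ≥ (s₂ - s₁) / (8 L(s₂)²)`. For `s₁ = log₂ (1 + y)`, `s₂ = log₂ (1 + xy)` the hypotheses
give `1 + x + 1/y ≤ ((1 + xy) / (1 + y))³`, i.e. `H_A ≤ 3 (s₂ - s₁)`, so `c₁ = 1/24`, `c₂ = 0` work.
-/

noncomputable def f (x : ℝ) : ℝ := Real.logb 2 x / (Real.logb 2 (2 + Real.logb 2 x)) ^ 2

open Real Set

noncomputable def g (t : ℝ) : ℝ := t / logb 2 (2 + t) ^ 2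

lemma tangent_le_mul_log {a u : ℝ} (ha : 0 < a) (hu : 0 < u) :
    (1 + log a) * u - a ≤ u * log u := by
  have h := log_le_sub_one_of_pos (div_pos ha hu)
  rw [log_div ha.ne' hu.ne'] at h
  have h' := mul_le_mul_of_nonneg_left h hu.le
  rw [mul_sub, mul_sub, mul_div_cancel₀ a hu.ne'] at h'
  linarith

lemma two_mul_le_mul_log_two_add {t : ℝ} (ht : 0 ≤ t) :
    2 * t ≤ 7 / 8 * ((2 + t) * log (2 + t)) := by
  have h := tangent_le_mul_log (a := 4) (u := 2 + t) (by norm_num) (by linarith)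
  have hlog4 : log 4 = 2 * log 2 := by
    rw [show (4 : ℝ) = 2 ^ 2 by norm_num, log_pow, Nat.cast_ofNat]
  rw [hlog4] at h
  nlinarith [log_two_gt_d9]

lemma hasDerivAt_g {t : ℝ} (ht : -1 < t) :
    HasDerivAt g (1 / logb 2 (2 + t) ^ 2 - 2 * t / ((2 + t) * log 2 * logb 2 (2 + t) ^ 3)) t := by
  have h2t : 0 < 2 + t := by linarith
  have hL : 0 < logb 2 (2 + t) := logb_pos one_lt_two (by linarith)
  have hlogb : HasDerivAt (fun s => logb 2 (2 + s)) ((1 / (2 + t)) / log 2) t :=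
    (((hasDerivAt_id t).const_add 2).log h2t.ne').div_const (log 2)
  have hquot := (hasDerivAt_id' t).fun_div (hlogb.fun_pow 2) (pow_ne_zero 2 hL.ne')
  refine hquot.congr_deriv ?_
  have := (log_pos one_lt_two).ne'
  field_simp
  ring

lemma deriv_g_ge {t : ℝ} (ht : 0 ≤ t) : 1 / (8 * logb 2 (2 + t) ^ 2) ≤ deriv g t := by
  have hL : 0 < logb 2 (2 + t) := logb_pos one_lt_two (by linarith)
  have hlog : logb 2 (2 + t) * log 2 = log (2 + t) := by
    rw [logb, div_mul_cancel₀ _ (log_pos one_lt_two).ne']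
  rw [(hasDerivAt_g (by linarith)).deriv]
  have h := two_mul_le_mul_log_two_add ht
  rw [← hlog] at h
  have hcorrection : 2 * t / ((2 + t) * log 2 * logb 2 (2 + t) ^ 3) ≤ 7 / 8 / logb 2 (2 + t) ^ 2 := by
    rw [div_le_div_iff₀ (by positivity) (by positivity)]
    nlinarith [pow_pos hL 2]
  have hsplit : 1 / (8 * logb 2 (2 + t) ^ 2) =
      1 / logb 2 (2 + t) ^ 2 - 7 / 8 / logb 2 (2 + t) ^ 2 := by
    field_simp; ring
  linarith

lemma g_sub_g_ge {s₁ s₂ : ℝ} (h₀ : 0 ≤ s₁) (h : s₁ ≤ s₂) :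
    (s₂ - s₁) / (8 * logb 2 (2 + s₂) ^ 2) ≤ g s₂ - g s₁ := by
  have hderiv : ∀ t ∈ Icc s₁ s₂, HasDerivAt g _ t := fun t ht => hasDerivAt_g (by linarith [ht.1])
  rw [div_eq_mul_one_div, mul_comm]
  refine (convex_Icc s₁ s₂).mul_sub_le_image_sub_of_le_deriv
    (fun t ht => (hderiv t ht).continuousAt.continuousWithinAt)
    (fun t ht => (hderiv t (interior_subset ht)).differentiableAt.differentiableWithinAt)
    (fun t ht => ?_) s₁ (left_mem_Icc.2 h) s₂ (right_mem_Icc.2 h) h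
  rw [interior_Icc] at ht
  have hL : 0 < logb 2 (2 + t) := logb_pos one_lt_two (by linarith [ht.1])
  calc 1 / (8 * logb 2 (2 + s₂) ^ 2) ≤ 1 / (8 * logb 2 (2 + t) ^ 2) := by
        gcongr
        · linarith [ht.1]
        · linarith [ht.1]
        · exact ht.2.le
    _ ≤ deriv g t := deriv_g_ge (by linarith [ht.1])

lemma one_add_add_inv_le_cube {x y : ℝ} (hx : (3000 : ℝ) ^ 2 ≤ x) (hy : 1 / (3000 : ℝ) ≤ y) :
    1 + x + 1 / y ≤ ((1 + x * y) / (1 + y)) ^ 3 := by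
  have hy0 : 0 < y := lt_of_lt_of_le (by norm_num) hy
  have hinv : 1 / y ≤ 3000 := by rwa [one_div_le hy0 (by norm_num)]
  have hratio : x / 3001 ≤ (1 + x * y) / (1 + y) := by
    rw [div_le_div_iff₀ (by norm_num) (by linarith)]
    nlinarith [mul_le_mul_of_nonneg_left hy (by linarith : (0 : ℝ) ≤ x)]
  calc 1 + x + 1 / y ≤ 2 * x := by linarith
    _ ≤ (x / 3001) ^ 3 := by
      rw [div_pow, le_div_iff₀ (by norm_num)]
      nlinarith [mul_le_mul hx hx (by norm_num) (by linarith : (0 : ℝ) ≤ x)]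
    _ ≤ ((1 + x * y) / (1 + y)) ^ 3 := by gcongr

lemma logb_one_add_add_inv_le {x y : ℝ} (hx : (3000 : ℝ) ^ 2 ≤ x) (hy : 1 / (3000 : ℝ) ≤ y) :
    logb 2 (1 + x + 1 / y) ≤ 3 * (logb 2 (1 + x * y) - logb 2 (1 + y)) := by
  have hy0 : 0 < y := lt_of_lt_of_le (by norm_num) hy
  have hxy : 0 < x * y := mul_pos (by nlinarith) hy0
  calc logb 2 (1 + x + 1 / y) ≤ logb 2 (((1 + x * y) / (1 + y)) ^ 3) :=
        logb_le_logb_of_le one_lt_two (by positivity) (one_add_add_inv_le_cube hx hy)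
    _ = 3 * (logb 2 (1 + x * y) - logb 2 (1 + y)) := by
        rw [logb_pow, logb_div (by positivity) (by positivity)]
        norm_num

theorem stmt_19 : ∃ c₁ c₂ : ℝ, 0 < c₁ ∧ 0 ≤ c₂ ∧ ∀ x y : ℝ,
    (3000 : ℝ) ^ 2 ≤ x → 1 / (3000 : ℝ) ≤ y →
    f (1 + x * y) - f (1 + y) ≥
      c₁ * Real.logb 2 (1 + x + 1 / y) /
        (Real.logb 2 (2 + Real.logb 2 (1 + x * y))) ^ 2 - c₂ := by
  refine ⟨1 / 24, 0, by norm_num, le_rfl, fun x y hx hy => ?_⟩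
  have hy0 : 0 < y := lt_of_lt_of_le (by norm_num) hy
  have hs₁ : 0 ≤ logb 2 (1 + y) := logb_nonneg one_lt_two (by linarith)
  have hs₁₂ : logb 2 (1 + y) ≤ logb 2 (1 + x * y) :=
    logb_le_logb_of_le one_lt_two (by linarith) (by nlinarith)
  show g (logb 2 (1 + x * y)) - g (logb 2 (1 + y)) ≥ _
  calc 1 / 24 * logb 2 (1 + x + 1 / y) / logb 2 (2 + logb 2 (1 + x * y)) ^ 2 - 0
      ≤ 1 / 24 * (3 * (logb 2 (1 + x * y) - logb 2 (1 + y))) /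
          logb 2 (2 + logb 2 (1 + x * y)) ^ 2 := by
        rw [sub_zero]; gcongr; exact logb_one_add_add_inv_le hx hy
    _ = (logb 2 (1 + x * y) - logb 2 (1 + y)) / (8 * logb 2 (2 + logb 2 (1 + x * y)) ^ 2) := by
        ring
    _ ≤ g (logb 2 (1 + x * y)) - g (logb 2 (1 + y)) := g_sub_g_ge hs₁ hs₁₂
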